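/- Any binary circulant matrix of size p×p whose rows have Hamming weight at least 3 has a Tanner graph containing a cycle of length 4 or 6; equivalently, its girth is at most 6. -/
import Mathlib


open Finset

/-- The `p×p` circulant matrix whose first row is `c`: entry `(i,j)` is `c (j - i)`. -/
def circ (p : ℕ) (c : Fin p → ZMod 2) : Matrix (Fin p) (Fin p) (ZMod 2) :=
  fun i j => c (j - i)

/-- Support of column `j`. -/
def colSupp {p : ℕ} (H : Matrix (Fin p) (Fin p) (ZMod 2)) (j : Fin p) : Finset (Fin p) :=
  Finset.univ.filter (fun l => H l j = 1)

/-- A circulant matrix with row weight at least 3 has girth at most 6: its Tanner graph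
contains a 4-cycle (two columns intersecting twice) or a 6-cycle. -/
theorem stmt13 (p : ℕ) (c : Fin p → ZMod 2)
    (hw : 3 ≤ (Finset.univ.filter (fun j => c j = 1)).card) :
    (∃ j1 j2 : Fin p, j1 ≠ j2 ∧
        2 ≤ (colSupp (circ p c) j1 ∩ colSupp (circ p c) j2).card) ∨
    (∃ l1 l2 l3 j1 j2 j3 : Fin p,
        l1 ≠ l2 ∧ l2 ≠ l3 ∧ l1 ≠ l3 ∧ j1 ≠ j2 ∧ j2 ≠ j3 ∧ j1 ≠ j3 ∧
        circ p c l1 j1 = 1 ∧ circ p c l1 j2 = 1 ∧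
        circ p c l2 j2 = 1 ∧ circ p c l2 j3 = 1 ∧
        circ p c l3 j3 = 1 ∧ circ p c l3 j1 = 1) := by
  obtain ⟨d1, d2, d3, hd1, hd2, hd3, h12, h13, h23⟩ :=
    Finset.two_lt_card_iff.mp (by omega : 2 < (Finset.univ.filter (fun j => c j = 1)).card)
  rw [Finset.mem_filter] at hd1 hd2 hd3
  have hp : 0 < p := d1.pos
  haveI : NeZero p := ⟨hp.ne'⟩
  refine Or.inr ⟨0, d2 - d3, d1 - d3, d1, d2, d1 + d2 - d3, ?_, ?_, ?_, h12, ?_, ?_,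
    ?_, ?_, ?_, ?_, ?_, ?_⟩
  · intro h; exact h23 (by rwa [eq_comm, sub_eq_zero] at h)
  · intro h; exact h12 (by have := sub_left_injective h; exact this.symm)
  · intro h; exact h13 (by rwa [eq_comm, sub_eq_zero] at h)
  · intro h
    apply h13
    rw [eq_sub_iff_add_eq] at h
    have h' : d3 + d2 = d1 + d2 := by rw [add_comm]; exact h
    exact (add_right_cancel h').symm
  · intro h
    apply h23
    rw [eq_sub_iff_add_eq] at h
    exact (add_left_cancel h).symm
  · show c (d1 - 0) = 1; rw [sub_zero]; exact hd1.2
  · show c (d2 - 0) = 1; rw [sub_zero]; exact hd2.2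
  · show c (d2 - (d2 - d3)) = 1; rw [sub_sub_cancel]; exact hd3.2
  · show c (d1 + d2 - d3 - (d2 - d3)) = 1
    have : d1 + d2 - d3 - (d2 - d3) = d1 := by abel
    rw [this]; exact hd1.2
  · show c (d1 + d2 - d3 - (d1 - d3)) = 1
    have : d1 + d2 - d3 - (d1 - d3) = d2 := by abel
    rw [this]; exact hd2.2
  · show c (d1 - (d1 - d3)) = 1; rw [sub_sub_cancel]; exact hd3.2
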